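/- arXiv:math/0201223 — 5 statements merged into one kernel-verified Lean document; each statement's English description precedes it below -/
import Mathlib

section
/- Let (μ^{ij}) be an invertible constant symmetric N×N real matrix and K a real. On the open set where g^{ij}(u) = μ^{ij} - K u^i u^j is invertible, the Christoffel symbols Γ^j_{sk}(u) of the Levi–Civita connection of the metric g_{ij} (the inverse matrix of g^{ij}) satisfy g^{is}(u) Γ^j_{sk}(u) = K δ^i_k u^j. -/
/-- partial derivative of a function on `ℝᴺ` in the `i`-th coordinate direction -/
noncomputable def pd {N : ℕ} (f : (Fin N → ℝ) → ℝ) (i : Fin N) (u : Fin N → ℝ) : ℝ :=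
  fderiv ℝ f u (Pi.single i 1)

/-- contravariant metric `g^{ij}(u) = μ^{ij} - K uⁱ uʲ` -/
noncomputable def gup {N : ℕ} (K : ℝ) (μ : Matrix (Fin N) (Fin N) ℝ)
    (u : Fin N → ℝ) : Matrix (Fin N) (Fin N) ℝ :=
  Matrix.of fun i j => μ i j - K * u i * u j

/-- covariant metric: matrix inverse of `gup` -/
noncomputable def glow {N : ℕ} (K : ℝ) (μ : Matrix (Fin N) (Fin N) ℝ)
    (u : Fin N → ℝ) : Matrix (Fin N) (Fin N) ℝ :=
  (gup K μ u)⁻¹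

/-- Christoffel symbols `Γ^j_{sk}` of the Levi–Civita connection of `glow` -/
noncomputable def Γ {N : ℕ} (K : ℝ) (μ : Matrix (Fin N) (Fin N) ℝ)
    (j s k : Fin N) (u : Fin N → ℝ) : ℝ :=
  (1 / 2) * ∑ l, gup K μ u j l *
    (pd (fun v => glow K μ v l s) k u + pd (fun v => glow K μ v l k) s u
      - pd (fun v => glow K μ v s k) l u)

section helpers
variable {N : ℕ} {K : ℝ} {μ : Matrix (Fin N) (Fin N) ℝ} {u : Fin N → ℝ}

lemma pd_sum {f : Fin N → ((Fin N → ℝ) → ℝ)} {k : Fin N}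
    (h : ∀ a, DifferentiableAt ℝ (f a) u) :
    pd (fun v => ∑ a, f a v) k u = ∑ a, pd (f a) k u := by
  unfold pd
  rw [fderiv_fun_sum (fun a _ => h a)]
  simp

lemma pd_mul {f g : (Fin N → ℝ) → ℝ} {k : Fin N}
    (hf : DifferentiableAt ℝ f u) (hg : DifferentiableAt ℝ g u) :
    pd (fun v => f v * g v) k u = pd f k u * g u + f u * pd g k u := by
  unfold pd
  rw [fderiv_fun_mul hf hg]
  simp [mul_comm]
  ring

lemma diff_proj (i : Fin N) : DifferentiableAt ℝ (fun v : Fin N → ℝ => v i) u :=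
  (hasFDerivAt_apply i u).differentiableAt

lemma diff_gup (i j : Fin N) : DifferentiableAt ℝ (fun v => gup K μ v i j) u := by
  simp only [gup, Matrix.of_apply]
  exact (differentiableAt_const _).sub
    (((differentiableAt_const K).mul (diff_proj i)).mul (diff_proj j))

lemma pd_gup (i j k : Fin N) :
    pd (fun v => gup K μ v i j) k u
      = -(K * ((if i = k then (1:ℝ) else 0) * u j + u i * (if j = k then 1 else 0))) := by
  have h1 := hasFDerivAt_apply (𝕜 := ℝ) i u
  have h2 := hasFDerivAt_apply (𝕜 := ℝ) j u
  have hm := (h1.const_mul K).fun_mul h2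
  have hfull := (hasFDerivAt_const (μ i j) u).fun_sub hm
  have hfe : (fun v : Fin N → ℝ => μ i j - K * v i * v j) = fun v => gup K μ v i j := by
    funext v; simp [gup]
  rw [hfe] at hfull
  unfold pd
  rw [hfull.fderiv]
  simp [Pi.single_apply]
  by_cases hik : i = k <;> by_cases hjk : j = k <;> simp [hik, hjk] <;> ring

end helpers

section more
variable {N : ℕ} {K : ℝ} {μ : Matrix (Fin N) (Fin N) ℝ} {u : Fin N → ℝ}

lemma diff_det {M : (Fin N → ℝ) → Matrix (Fin N) (Fin N) ℝ}
    (h : ∀ i j, DifferentiableAt ℝ (fun v => M v i j) u) :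
    DifferentiableAt ℝ (fun v => (M v).det) u := by
  simp only [Matrix.det_apply']
  refine DifferentiableAt.fun_sum fun σ _ => DifferentiableAt.const_mul ?_ _
  exact (HasFDerivAt.finset_prod (u := Finset.univ)
    (fun i _ => (h (σ i) i).hasFDerivAt)).differentiableAt

lemma diff_glow (hu : (gup K μ u).det ≠ 0) (a b : Fin N) :
    DifferentiableAt ℝ (fun v => glow K μ v a b) u := by
  have hdet : DifferentiableAt ℝ (fun v => (gup K μ v).det) u :=
    diff_det fun i j => diff_gup i j
  have hadj : DifferentiableAt ℝ (fun v => (gup K μ v).adjugate a b) u := by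
    simp only [Matrix.adjugate_apply]
    apply diff_det
    intro i j
    simp only [Matrix.updateRow_apply]
    by_cases hib : i = b
    · simp [hib]
    · simp only [hib, if_false]; exact diff_gup i j
  have heq : (fun v => glow K μ v a b)
      = fun v => ((gup K μ v).det)⁻¹ * (gup K μ v).adjugate a b := by
    funext v
    rw [glow, Matrix.inv_def]
    simp [Ring.inverse_eq_inv']
  rw [heq]
  exact (hdet.inv hu).mul hadj

lemma ev_inv (hu : (gup K μ u).det ≠ 0) :
    ∀ᶠ v in nhds u, ∀ i b : Fin N,
      ∑ a, gup K μ v i a * glow K μ v a b = if i = b then (1:ℝ) else 0 := by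
  have hcont : Continuous fun v : Fin N → ℝ => (gup K μ v).det := by
    apply Continuous.matrix_det
    apply continuous_matrix
    intro i j
    simp only [gup, Matrix.of_apply]
    fun_prop
  have hopen : IsOpen {v : Fin N → ℝ | (gup K μ v).det ≠ 0} :=
    isOpen_compl_singleton.preimage hcont
  filter_upwards [hopen.mem_nhds hu] with v hv i b
  have := Matrix.mul_nonsing_inv (A := gup K μ v) (isUnit_iff_ne_zero.mpr hv)
  have h2 := congrFun (congrFun this i) b
  rw [Matrix.mul_apply] at h2
  rw [glow]
  rw [h2, Matrix.one_apply]

end more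

theorem aux_contravariant_connection (N : ℕ) (K : ℝ)
    (μ : Matrix (Fin N) (Fin N) ℝ) (hμ : μ.IsSymm) (hμinv : IsUnit μ.det)
    (u : Fin N → ℝ) (hu : IsUnit (gup K μ u).det) :
    ∀ i j k, ∑ s, gup K μ u i s * ((1 / 2) * ∑ l, gup K μ u j l *
    (pd (fun v => glow K μ v l s) k u + pd (fun v => glow K μ v l k) s u
      - pd (fun v => glow K μ v s k) l u))
      = K * (if i = k then (1 : ℝ) else 0) * u j := by
  have hd : (gup K μ u).det ≠ 0 := by
    simpa [isUnit_iff_ne_zero] using hu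
  have hgsym : ∀ a b, gup K μ u a b = gup K μ u b a := by
    intro a b
    simp only [gup, Matrix.of_apply]
    rw [← hμ.apply a b]; ring
  have hGsym : ∀ a b, glow K μ u a b = glow K μ u b a := by
    have ht : (gup K μ u).transpose = gup K μ u := Matrix.ext fun a b => hgsym b a
    intro a b
    have : glow K μ u a b = ((gup K μ u)⁻¹).transpose b a := rfl
    rw [this, Matrix.transpose_nonsing_inv, ht]; rfl
  have hmul : ∀ a b, ∑ c, gup K μ u a c * glow K μ u c b
      = if a = b then (1:ℝ) else 0 := by
    intro a b
    have := congrFun (congrFun (Matrix.mul_nonsing_inv (A := gup K μ u) hu) a) b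
    rw [Matrix.mul_apply] at this
    rw [glow, this, Matrix.one_apply]
  have hmul' : ∀ a b, ∑ c, glow K μ u a c * gup K μ u c b
      = if a = b then (1:ℝ) else 0 := by
    intro a b
    have := congrFun (congrFun (Matrix.nonsing_inv_mul (A := gup K μ u) hu) a) b
    rw [Matrix.mul_apply] at this
    rw [glow, this, Matrix.one_apply]
  set w : Fin N → ℝ := fun x => ∑ a, u a * glow K μ u a x with hwdef
  -- L3 : derivative of the eventually-constant product identity
  have hL3 : ∀ i b k : Fin N,
      ∑ a, (pd (fun v => gup K μ v i a) k u * glow K μ u a b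
        + gup K μ u i a * pd (fun v => glow K μ v a b) k u) = 0 := by
    intro i b k
    have hev : (fun v => ∑ a, gup K μ v i a * glow K μ v a b)
        =ᶠ[nhds u] fun _ => if i = b then (1:ℝ) else 0 :=
      (ev_inv hd).mono fun v hv => hv i b
    have hz : pd (fun v => ∑ a, gup K μ v i a * glow K μ v a b) k u = 0 := by
      unfold pd
      rw [hev.fderiv_eq]
      simp
    rw [pd_sum (fun a => (diff_gup i a).fun_mul (diff_glow hd a b))] at hz
    rw [← hz]
    exact Finset.sum_congr rfl fun a _ =>
      (pd_mul (diff_gup i a) (diff_glow hd a b)).symm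
  -- A : g^{ia} ∂_k G_{ab} = K (δ_{ik} w_b + u_i G_{kb})
  have hA : ∀ i b k : Fin N,
      ∑ a, gup K μ u i a * pd (fun v => glow K μ v a b) k u
        = K * ((if i = k then (1:ℝ) else 0) * w b + u i * glow K μ u k b) := by
    intro i b k
    have h3 := hL3 i b k
    rw [Finset.sum_add_distrib] at h3
    have hsum1 : ∑ a, pd (fun v => gup K μ v i a) k u * glow K μ u a b
        = -(K * ((if i = k then (1:ℝ) else 0) * w b + u i * glow K μ u k b)) := by
      simp only [pd_gup]
      have : ∀ a : Fin N,
          -(K * ((if i = k then (1:ℝ) else 0) * u a + u i * (if a = k then 1 else 0)))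
            * glow K μ u a b
          = -((K * (if i = k then (1:ℝ) else 0)) * (u a * glow K μ u a b))
            - (if a = k then K * u i * glow K μ u a b else 0) := by
        intro a
        by_cases h : a = k <;> by_cases h2 : i = k <;> simp [h, h2] <;> ring
      rw [Finset.sum_congr rfl fun a _ => this a]
      rw [Finset.sum_sub_distrib, Finset.sum_neg_distrib, ← Finset.mul_sum,
        Finset.sum_ite_eq' Finset.univ k]
      simp only [Finset.mem_univ, if_true, hwdef]
      ring
    rw [hsum1] at h3
    linarith [h3]
  -- D : ∂_k G_{lb} = K (G_{lk} w_b + w_l G_{kb})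
  have hD : ∀ k l b : Fin N,
      pd (fun v => glow K μ v l b) k u
        = K * (glow K μ u l k * w b + w l * glow K μ u k b) := by
    intro k l b
    have h1 : pd (fun v => glow K μ v l b) k u
        = ∑ a, (∑ c, glow K μ u l c * gup K μ u c a)
            * pd (fun v => glow K μ v a b) k u := by
      have : ∀ a : Fin N, (∑ c, glow K μ u l c * gup K μ u c a)
          * pd (fun v => glow K μ v a b) k u
          = if l = a then pd (fun v => glow K μ v a b) k u else 0 := by
        intro a; rw [hmul' l a]; by_cases h : l = a <;> simp [h]
      rw [Finset.sum_congr rfl fun a _ => this a, Finset.sum_ite_eq Finset.univ l]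
      simp
    rw [h1]
    have h2 : ∀ a : Fin N, (∑ c, glow K μ u l c * gup K μ u c a)
        * pd (fun v => glow K μ v a b) k u
        = ∑ c, glow K μ u l c * (gup K μ u c a * pd (fun v => glow K μ v a b) k u) := by
      intro a; rw [Finset.sum_mul]; exact Finset.sum_congr rfl fun c _ => by ring
    rw [Finset.sum_congr rfl fun a _ => h2 a, Finset.sum_comm]
    have h3 : ∀ c : Fin N,
        ∑ a, glow K μ u l c * (gup K μ u c a * pd (fun v => glow K μ v a b) k u)
        = glow K μ u l c * (K * ((if c = k then (1:ℝ) else 0) * w b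
            + u c * glow K μ u k b)) := by
      intro c
      rw [← Finset.mul_sum, hA c b k]
    rw [Finset.sum_congr rfl fun c _ => h3 c]
    have h4 : ∀ c : Fin N, glow K μ u l c * (K * ((if c = k then (1:ℝ) else 0) * w b
        + u c * glow K μ u k b))
        = (if c = k then K * glow K μ u l c * w b else 0)
          + (K * glow K μ u k b) * (u c * glow K μ u c l) := by
      intro c
      rw [hGsym c l]
      by_cases h : c = k <;> simp [h] <;> ring
    rw [Finset.sum_congr rfl fun c _ => h4 c, Finset.sum_add_distrib,
      Finset.sum_ite_eq' Finset.univ k, ← Finset.mul_sum]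
    simp only [Finset.mem_univ, if_true, hwdef]
    ring
  -- ∑_l g^{jl} w_l = u_j
  have hwu : ∀ j, ∑ l, gup K μ u j l * w l = u j := by
    intro j
    simp only [hwdef]
    have h1 : ∀ l : Fin N, gup K μ u j l * ∑ a, u a * glow K μ u a l
        = ∑ a, u a * (gup K μ u j l * glow K μ u l a) := by
      intro l
      rw [Finset.mul_sum]
      exact Finset.sum_congr rfl fun a _ => by rw [hGsym a l]; ring
    rw [Finset.sum_congr rfl fun l _ => h1 l, Finset.sum_comm]
    have h2 : ∀ a : Fin N, ∑ l, u a * (gup K μ u j l * glow K μ u l a)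
        = if j = a then u a else 0 := by
      intro a
      rw [← Finset.mul_sum, hmul j a]
      by_cases h : j = a <;> simp [h]
    rw [Finset.sum_congr rfl fun a _ => h2 a, Finset.sum_ite_eq Finset.univ j]
    simp
  -- Γ = K u^j G_{sk}
  have hΓ : ∀ j s k : Fin N, ((1:ℝ) / 2) * (∑ l, gup K μ u j l *
      (pd (fun v => glow K μ v l s) k u + pd (fun v => glow K μ v l k) s u
        - pd (fun v => glow K μ v s k) l u))
      = K * u j * glow K μ u s k := by
    intro j s k
    have hterm : ∀ l : Fin N, gup K μ u j l *
        (pd (fun v => glow K μ v l s) k u + pd (fun v => glow K μ v l k) s u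
          - pd (fun v => glow K μ v s k) l u)
        = (2 * K * glow K μ u s k) * (gup K μ u j l * w l) := by
      intro l
      rw [hD k l s, hD s l k, hD l s k, hGsym s l, hGsym k s]
      ring
    rw [Finset.sum_congr rfl fun l _ => hterm l, ← Finset.mul_sum, hwu j]
    ring
  intro i j k
  rw [Finset.sum_congr rfl fun s _ => by rw [hΓ j s k]]
  have h5 : ∀ s : Fin N, gup K μ u i s * (K * u j * glow K μ u s k)
      = (K * u j) * (gup K μ u i s * glow K μ u s k) := fun s => by ring
  rw [Finset.sum_congr rfl fun s _ => h5 s, ← Finset.mul_sum, hmul i k]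
  ring


/-- the contravariant Levi–Civita connection of
`g^{ij}(u) = μ^{ij} - K uⁱ uʲ` is `g^{is} Γ^j_{sk} = K δ^i_k uʲ`. -/
theorem model_metric_contravariant_connection (N : ℕ) (K : ℝ)
    (μ : Matrix (Fin N) (Fin N) ℝ) (hμ : μ.IsSymm) (hμinv : IsUnit μ.det)
    (u : Fin N → ℝ) (hu : IsUnit (gup K μ u).det) :
    ∀ i j k, ∑ s, gup K μ u i s * Γ K μ j s k u
      = K * (if i = k then (1 : ℝ) else 0) * u j := by
  intro i j k
  simpa only [Γ] using aux_contravariant_connection N K μ hμ hμinv u hu i j k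
end

section
/- Let η be an invertible constant symmetric N×N real matrix, K₁ ∈ ℝ, and H^1,...,H^N smooth functions on an open U ⊆ ℝ^N. Set b^{ij}_k(u) = η^{is} ∂²H^j/∂u^s∂u^k - K₁ δ^i_k u^j. Then the relation b^{ij}_s b^{sr}_k = b^{ir}_s b^{sj}_k (summation over s) holds for all i,j,r,k if and only if (∂²H^i/∂u^k∂u^s) η^{sp} (∂²H^j/∂u^p∂u^l) = (∂²H^j/∂u^k∂u^s) η^{sp} (∂²H^i/∂u^p∂u^l) for all i,j,k,l (summation over s,p). -/
private def dlt {N : ℕ} (i k : Fin N) : ℝ := if i = k then 1 else 0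

private def Xm {N : ℕ} (η : Matrix (Fin N) (Fin N) ℝ) (M : Fin N → Fin N → Fin N → ℝ)
    (i j k : Fin N) : ℝ := ∑ a, η i a * M j a k

private def Cm {N : ℕ} (η : Matrix (Fin N) (Fin N) ℝ) (M : Fin N → Fin N → Fin N → ℝ)
    (j r a k : Fin N) : ℝ := ∑ s, ∑ c, M j a s * η s c * M r c k

private lemma hd1 {N : ℕ} (f : Fin N → ℝ) (k : Fin N) : ∑ s, f s * dlt s k = f k := by
  simp [dlt]

private lemma hd2 {N : ℕ} (f : Fin N → ℝ) (i : Fin N) : ∑ s, dlt i s * f s = f i := by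
  simp [dlt]

private lemma hXC {N : ℕ} (η : Matrix (Fin N) (Fin N) ℝ) (M : Fin N → Fin N → Fin N → ℝ)
    (i j r k : Fin N) : ∑ s, Xm η M i j s * Xm η M s r k = ∑ a, η i a * Cm η M j r a k := by
  unfold Xm Cm
  calc ∑ s, (∑ a, η i a * M j a s) * (∑ c, η s c * M r c k)
      = ∑ s, ∑ a, ∑ c, η i a * (M j a s * η s c * M r c k) := by
        refine Finset.sum_congr rfl fun s _ => ?_
        rw [Finset.sum_mul]
        refine Finset.sum_congr rfl fun a _ => ?_
        rw [Finset.mul_sum]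
        exact Finset.sum_congr rfl fun c _ => by ring
    _ = ∑ a, ∑ s, ∑ c, η i a * (M j a s * η s c * M r c k) := Finset.sum_comm
    _ = ∑ a, η i a * ∑ s, ∑ c, M j a s * η s c * M r c k := by
        refine Finset.sum_congr rfl fun a _ => ?_
        rw [Finset.mul_sum]
        exact Finset.sum_congr rfl fun s _ => (Finset.mul_sum _ _ _).symm

private lemma hexp {N : ℕ} (η : Matrix (Fin N) (Fin N) ℝ) (K₁ : ℝ) (u : Fin N → ℝ)
    (M : Fin N → Fin N → Fin N → ℝ) (b : Fin N → Fin N → Fin N → ℝ)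
    (hb : ∀ i j k, b i j k = Xm η M i j k - K₁ * dlt i k * u j) (i j r k : Fin N) :
    ∑ s, b i j s * b s r k
      = (∑ a, η i a * Cm η M j r a k) - Xm η M i j k * (K₁ * u r)
        - Xm η M i r k * (K₁ * u j) + dlt i k * (K₁ ^ 2 * (u j * u r)) := by
  have step : ∀ s, b i j s * b s r k
      = Xm η M i j s * Xm η M s r k - (Xm η M i j s * dlt s k) * (K₁ * u r)
        - (dlt i s * Xm η M s r k) * (K₁ * u j)
        + (dlt i s * dlt s k) * (K₁ ^ 2 * (u j * u r)) := by
    intro s; rw [hb, hb]; ring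
  rw [Finset.sum_congr rfl fun s _ => step s]
  rw [Finset.sum_add_distrib, Finset.sum_sub_distrib, Finset.sum_sub_distrib,
    ← Finset.sum_mul, ← Finset.sum_mul, ← Finset.sum_mul,
    hXC, hd1 (fun s => Xm η M i j s) k, hd2 (fun s => Xm η M s r k) i,
    hd2 (fun s => dlt s k) i]

private lemma aux {N : ℕ} (η : Matrix (Fin N) (Fin N) ℝ) (hηinv : IsUnit η.det)
    (K₁ : ℝ) (u : Fin N → ℝ) (M : Fin N → Fin N → Fin N → ℝ)
    (b : Fin N → Fin N → Fin N → ℝ)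
    (hb : ∀ i j k, b i j k = ∑ s, η i s * M j s k - K₁ * (if i = k then (1:ℝ) else 0) * u j) :
    (∀ i j r k, ∑ s, b i j s * b s r k = ∑ s, b i r s * b s j k) ↔
    (∀ i j k l, ∑ s, ∑ p, M i k s * η s p * M j p l = ∑ s, ∑ p, M j k s * η s p * M i p l) := by
  have hb' : ∀ i j k, b i j k = Xm η M i j k - K₁ * dlt i k * u j := by
    intro i j k; rw [hb]; rfl
  have hdiff : ∀ i j r k,
      (∑ s, b i j s * b s r k) - (∑ s, b i r s * b s j k)
        = ∑ a, η i a * (Cm η M j r a k - Cm η M r j a k) := by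
    intro i j r k
    rw [hexp η K₁ u M b hb' i j r k, hexp η K₁ u M b hb' i r j k]
    simp only [mul_sub, Finset.sum_sub_distrib]
    ring
  constructor
  · intro h i j k l
    have hv : η.mulVec (fun a => Cm η M i j a l - Cm η M j i a l) = 0 := by
      funext i'
      have h0 : (∑ s, b i' i s * b s j l) - (∑ s, b i' j s * b s i l) = 0 :=
        sub_eq_zero.mpr (h i' i j l)
      rw [hdiff] at h0
      simpa [Matrix.mulVec, dotProduct] using h0
    have hv0 : (fun a => Cm η M i j a l - Cm η M j i a l) = 0 := by
      calc (fun a => Cm η M i j a l - Cm η M j i a l)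
          = (η⁻¹ * η).mulVec (fun a => Cm η M i j a l - Cm η M j i a l) := by
            rw [Matrix.nonsing_inv_mul η hηinv, Matrix.one_mulVec]
        _ = η⁻¹.mulVec (η.mulVec (fun a => Cm η M i j a l - Cm η M j i a l)) :=
            (Matrix.mulVec_mulVec _ _ _).symm
        _ = 0 := by rw [hv, Matrix.mulVec_zero]
    have := congrFun hv0 k
    exact sub_eq_zero.mp this
  · intro h i j r k
    have : (∑ s, b i j s * b s r k) - (∑ s, b i r s * b s j k) = 0 := by
      rw [hdiff]
      refine Finset.sum_eq_zero fun a _ => ?_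
      rw [show Cm η M j r a k = Cm η M r j a k from h j r a k]; ring
    exact sub_eq_zero.mp this

/-- for `b^{ij}_k = η^{is} ∂²Hʲ/∂uˢ∂u^k - K₁ δ^i_k uʲ`, the relation
`b^{ij}_s b^{sr}_k = b^{ir}_s b^{sj}_k` is equivalent to the associativity-type
equation `H^i_{ks} η^{sp} H^j_{pl} = H^j_{ks} η^{sp} H^i_{pl}`. -/
theorem canonical_form_relation_s4_iff (N : ℕ)
    (η : Matrix (Fin N) (Fin N) ℝ) (hηsym : η.IsSymm) (hηinv : IsUnit η.det)
    (K₁ : ℝ) (U : Set (Fin N → ℝ)) (hU : IsOpen U)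
    (H : Fin N → (Fin N → ℝ) → ℝ) (hH : ∀ i, ContDiffOn ℝ (⊤ : ℕ∞) (H i) U)
    (b : Fin N → Fin N → Fin N → (Fin N → ℝ) → ℝ)
    (hb : ∀ i j k u, b i j k u =
      ∑ s, η i s * pd (pd (H j) s) k u - K₁ * (if i = k then (1 : ℝ) else 0) * u j) :
    (∀ u ∈ U, ∀ i j r k,
        ∑ s, b i j s u * b s r k u = ∑ s, b i r s u * b s j k u) ↔
    (∀ u ∈ U, ∀ i j k l,
        ∑ s, ∑ p, pd (pd (H i) k) s u * η s p * pd (pd (H j) p) l u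
          = ∑ s, ∑ p, pd (pd (H j) k) s u * η s p * pd (pd (H i) p) l u) := by
  constructor
  · intro h u hu
    exact (aux η hηinv K₁ u (fun j a k => pd (pd (H j) a) k u) (fun i j k => b i j k u)
      (fun i j k => hb i j k u)).mp (h u hu)
  · intro h u hu
    exact (aux η hηinv K₁ u (fun j a k => pd (pd (H j) a) k u) (fun i j k => b i j k u)
      (fun i j k => hb i j k u)).mpr (h u hu)
end

section
/- Let U ⊆ ℝ^N be open and convex, η an invertible constant symmetric N×N real matrix, K₁ ∈ ℝ, and let g^{ij}, b^{ij}_k : U → ℝ be smooth functions satisfying: g^{ij} = g^{ji}; ∂g^{ij}/∂u^k = b^{ij}_k + b^{ji}_k; η^{is} b^{jr}_s = η^{js} b^{ir}_s; and ∂b^{jr}_s/∂u^k - ∂b^{jr}_k/∂u^s = K₁(δ^r_s δ^j_k - δ^j_s δ^r_k). Then there exist smooth functions H^1,...,H^N on U with g^{ij} = η^{is} ∂H^j/∂u^s + η^{js} ∂H^i/∂u^s - K₁ u^i u^j and b^{ij}_k = η^{is} ∂²H^j/∂u^s∂u^k - K₁ δ^i_k u^j. -/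
open Set MeasureTheory Filter
open scoped Topology ENNReal NNReal

lemma pi_decomp {N : ℕ} (v : Fin N → ℝ) :
    v = ∑ i, v i • (Pi.single i (1:ℝ) : Fin N → ℝ) := by
  funext j
  rw [Finset.sum_apply]
  simp only [Pi.smul_apply, Pi.single_apply, smul_eq_mul]
  rw [Finset.sum_eq_single j]
  · simp
  · intro i _ hij; simp [Ne.symm hij]
  · simp

lemma clm_apply_pi {N : ℕ} (T : (Fin N → ℝ) →L[ℝ] ℝ) (v : Fin N → ℝ) :
    T v = ∑ k, v k * T (Pi.single k 1) := by
  conv_lhs => rw [pi_decomp v]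
  rw [map_sum]
  exact Finset.sum_congr rfl fun k _ => by rw [T.map_smul]; simp

lemma cdo_diffAt {N : ℕ} {U : Set (Fin N → ℝ)} (hUo : IsOpen U) {f : (Fin N → ℝ) → ℝ}
    (h : ContDiffOn ℝ (⊤ : ℕ∞) f U) {x : Fin N → ℝ} (hx : x ∈ U) : DifferentiableAt ℝ f x :=
  (h.contDiffAt (hUo.mem_nhds hx)).differentiableAt (by simp)

lemma cdo_fderiv_cont {N : ℕ} {U : Set (Fin N → ℝ)} (hUo : IsOpen U) {f : (Fin N → ℝ) → ℝ}
    (h : ContDiffOn ℝ (⊤ : ℕ∞) f U) : ContinuousOn (fderiv ℝ f) U :=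
  h.continuousOn_fderiv_of_isOpen hUo (by simp)

lemma cdo_coord {N : ℕ} {U : Set (Fin N → ℝ)} (j : Fin N) :
    ContDiffOn ℝ (⊤ : ℕ∞) (fun v : Fin N → ℝ => v j) U :=
  (contDiff_apply ℝ ℝ j).contDiffOn

lemma exists_potential {N : ℕ} {U : Set (Fin N → ℝ)} (hUo : IsOpen U) (hUc : Convex ℝ U)
    (f : Fin N → (Fin N → ℝ) → ℝ) (hf : ∀ k, ContDiffOn ℝ (⊤ : ℕ∞) (f k) U)
    (hcurl : ∀ u ∈ U, ∀ k l, pd (f k) l u = pd (f l) k u) :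
    ∃ F : (Fin N → ℝ) → ℝ, ContDiffOn ℝ (⊤ : ℕ∞) F U ∧ ∀ u ∈ U, ∀ k, pd F k u = f k u := by
  rcases U.eq_empty_or_nonempty with hU | ⟨c, hc⟩
  · refine ⟨fun _ => 0, ?_, ?_⟩
    · intro x hx; rw [hU] at hx; cases hx
    · intro u hu; rw [hU] at hu; cases hu
  set γ : ℝ → (Fin N → ℝ) → (Fin N → ℝ) := fun t x => c + t • (x - c) with hγ_def
  set φ : (Fin N → ℝ) → ℝ → ℝ := fun x t => ∑ k, (x k - c k) * f k (γ t x) with hφ_def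
  set F : (Fin N → ℝ) → ℝ := fun x => ∫ t in (0:ℝ)..1, φ x t with hF_def
  set L : (Fin N → ℝ) → ((Fin N → ℝ) →L[ℝ] ℝ) :=
    fun x => ∑ i, f i x • ContinuousLinearMap.proj i with hL_def
  have hLapply : ∀ x l, L x (Pi.single l 1) = f l x := by
    intro x l
    rw [hL_def]
    rw [ContinuousLinearMap.sum_apply]
    rw [Finset.sum_eq_single l]
    · simp
    · intro i _ hil
      simp [Pi.single_apply, Ne.symm hil]
    · simp
  have hγmem : ∀ t ∈ Icc (0:ℝ) 1, ∀ x ∈ U, γ t x ∈ U := by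
    intro t ht x hx
    have h := hUc hc hx (by linarith [ht.2] : (0:ℝ) ≤ 1 - t) ht.1 (by ring)
    convert h using 1
    rw [hγ_def]; simp only [smul_sub]; module
  have key : ∀ x₀ ∈ U, HasFDerivAt F (L x₀) x₀ := by
    intro x₀ hx₀
    obtain ⟨δ, δpos, hδU⟩ := Metric.isOpen_iff.1 hUo x₀ hx₀
    set ε := δ / 2 with hε_def
    have εpos : 0 < ε := by positivity
    have hcb : Metric.closedBall x₀ ε ⊆ U :=
      (Metric.closedBall_subset_ball (by rw [hε_def]; linarith)).trans hδU
    -- bounds on a compact neighborhood of the segments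
    set K : Set (Fin N → ℝ) := (fun p : ℝ × (Fin N → ℝ) => γ p.1 p.2) ''
      (Icc (0:ℝ) 1 ×ˢ Metric.closedBall x₀ ε) with hK_def
    have hKco : IsCompact K :=
      (isCompact_Icc.prod (isCompact_closedBall _ _)).image (by fun_prop)
    have hKU : K ⊆ U := by
      rintro _ ⟨⟨t, x⟩, ⟨ht, hxm⟩, rfl⟩
      exact hγmem t ht x (hcb hxm)
    have hbnd : ∃ C : ℝ, 0 ≤ C ∧ ∀ y ∈ K, ∀ k, ‖f k y‖ ≤ C ∧ ‖fderiv ℝ (f k) y‖ ≤ C := by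
      have hcpair : ∀ k : Fin N,
          ContinuousOn (fun y => (f k y, fderiv ℝ (f k) y)) K := by
        intro k
        exact ((hf k).continuousOn.mono hKU).prodMk
          ((cdo_fderiv_cont hUo (hf k)).mono hKU)
      choose Cf hCf using fun k : Fin N =>
        hKco.exists_bound_of_continuousOn (hcpair k)
      refine ⟨∑ k, |Cf k|, Finset.sum_nonneg fun k _ => abs_nonneg _, ?_⟩
      intro y hy k
      have h1 : ‖(f k y, fderiv ℝ (f k) y)‖ ≤ |Cf k| := (hCf k y hy).trans (le_abs_self _)
      have h2 : |Cf k| ≤ ∑ k', |Cf k'| :=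
        Finset.single_le_sum (fun k' _ => abs_nonneg (Cf k')) (Finset.mem_univ k)
      have hfst : ‖f k y‖ ≤ ‖(f k y, fderiv ℝ (f k) y)‖ :=
        norm_fst_le ((f k y, fderiv ℝ (f k) y) : ℝ × ((Fin N → ℝ) →L[ℝ] ℝ))
      have hsnd : ‖fderiv ℝ (f k) y‖ ≤ ‖(f k y, fderiv ℝ (f k) y)‖ :=
        norm_snd_le ((f k y, fderiv ℝ (f k) y) : ℝ × ((Fin N → ℝ) →L[ℝ] ℝ))
      exact ⟨le_trans (le_trans hfst h1) h2, le_trans (le_trans hsnd h1) h2⟩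
    obtain ⟨C, hC0, hCb⟩ := hbnd
    have hγK : ∀ t ∈ Icc (0:ℝ) 1, ∀ x ∈ Metric.closedBall x₀ ε, γ t x ∈ K := by
      intro t ht x hx
      exact ⟨(t, x), ⟨ht, hx⟩, rfl⟩
    set F' : (Fin N → ℝ) → ℝ → ((Fin N → ℝ) →L[ℝ] ℝ) := fun x t =>
      ∑ k, (((x k - c k) * t) • fderiv ℝ (f k) (γ t x)
        + f k (γ t x) • ContinuousLinearMap.proj k) with hF'_def
    have hγcont : ∀ x : Fin N → ℝ, Continuous (fun t : ℝ => γ t x) := by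
      intro x; rw [hγ_def]; fun_prop
    -- continuity of φ x in t
    have hφcont : ∀ x ∈ Metric.closedBall x₀ ε, ContinuousOn (φ x) (Icc (0:ℝ) 1) := by
      intro x hx
      rw [hφ_def]
      apply continuousOn_finset_sum
      intro k _
      apply ContinuousOn.mul continuousOn_const
      apply ContinuousOn.comp (hf k).continuousOn ((hγcont x).continuousOn)
      intro t ht
      exact hγmem t ht x (hcb hx)
    -- continuity of F' x₀ in t
    have hF'cont : ContinuousOn (F' x₀) (Icc (0:ℝ) 1) := by
      rw [hF'_def]
      apply continuousOn_finset_sum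
      intro k _
      apply ContinuousOn.add
      · apply ContinuousOn.smul (ContinuousOn.mul continuousOn_const continuousOn_id)
        apply ContinuousOn.comp (cdo_fderiv_cont hUo (hf k))
          ((hγcont x₀).continuousOn)
        intro t ht
        exact hγmem t ht x₀ (hcb (Metric.mem_closedBall_self εpos.le))
      · apply ContinuousOn.fun_smul _ continuousOn_const
        apply ContinuousOn.comp (hf k).continuousOn ((hγcont x₀).continuousOn)
        intro t ht
        exact hγmem t ht x₀ (hcb (Metric.mem_closedBall_self εpos.le))
    have hIoc_Icc : Set.uIoc (0:ℝ) 1 ⊆ Icc (0:ℝ) 1 := by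
      rw [Set.uIoc_of_le zero_le_one]
      exact Ioc_subset_Icc_self
    have hball_cb : Metric.ball x₀ ε ⊆ Metric.closedBall x₀ ε := Metric.ball_subset_closedBall
    -- differentiation under the integral sign
    have hFd : HasFDerivAt (fun x => ∫ t in (0:ℝ)..1, φ x t)
        (∫ t in (0:ℝ)..1, F' x₀ t) x₀ := by
      apply intervalIntegral.hasFDerivAt_integral_of_dominated_of_fderiv_le
        (bound := fun _ => (N : ℝ) * ((‖x₀ - c‖ + ε) * C + C)) (Metric.ball_mem_nhds x₀ εpos)
      · filter_upwards [Metric.ball_mem_nhds x₀ εpos] with x hx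
        exact ((hφcont x (hball_cb hx)).mono hIoc_Icc).aestronglyMeasurable measurableSet_uIoc
      · exact ((hφcont x₀ (Metric.mem_closedBall_self εpos.le)).mono
          (by rw [Set.uIcc_of_le zero_le_one])).intervalIntegrable
      · exact ((hF'cont.mono hIoc_Icc)).aestronglyMeasurable measurableSet_uIoc
      · -- bound
        refine Eventually.of_forall ?_
        intro t ht x hx
        have htI : t ∈ Icc (0:ℝ) 1 := hIoc_Icc ht
        have hγx : γ t x ∈ K := hγK t htI x (hball_cb hx)
        rw [hF'_def]
        refine le_trans (norm_sum_le _ _) ?_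
        have hterm : ∀ k : Fin N, ‖((x k - c k) * t) • fderiv ℝ (f k) (γ t x)
            + f k (γ t x) • ContinuousLinearMap.proj (R := ℝ) (φ := fun _ : Fin N => ℝ) k‖
            ≤ (‖x₀ - c‖ + ε) * C + C := by
          intro k
          refine le_trans (norm_add_le _ _) (add_le_add ?_ ?_)
          · rw [norm_smul]
            have h1 : ‖(x k - c k) * t‖ ≤ ‖x₀ - c‖ + ε := by
              rw [norm_mul]
              calc ‖x k - c k‖ * ‖t‖ ≤ ‖x k - c k‖ * 1 := by
                    apply mul_le_mul_of_nonneg_left _ (norm_nonneg _)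
                    rw [Real.norm_eq_abs]
                    exact abs_le.2 ⟨by linarith [htI.1], htI.2⟩
                _ = ‖x k - c k‖ := mul_one _
                _ ≤ ‖x - c‖ := by
                    have := norm_le_pi_norm (x - c) k
                    simpa using this
                _ ≤ ‖x - x₀‖ + ‖x₀ - c‖ := by
                    have : x - c = (x - x₀) + (x₀ - c) := by abel
                    rw [this]; exact norm_add_le _ _
                _ ≤ ε + ‖x₀ - c‖ := by
                    have : ‖x - x₀‖ ≤ ε := by
                      rw [← dist_eq_norm]
                      exact le_of_lt (Metric.mem_ball.1 hx)
                    linarith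
                _ = ‖x₀ - c‖ + ε := by ring
            apply mul_le_mul h1 (hCb _ hγx k).2 (norm_nonneg _)
            positivity
          · rw [norm_smul]
            have hproj : ‖ContinuousLinearMap.proj (R := ℝ) (φ := fun _ : Fin N => ℝ) k‖ ≤ 1 := by
              apply ContinuousLinearMap.opNorm_le_bound _ zero_le_one
              intro v
              rw [one_mul, ContinuousLinearMap.proj_apply]
              exact norm_le_pi_norm v k
            have := mul_le_mul (hCb _ hγx k).1 hproj (norm_nonneg _) hC0
            linarith
        calc ∑ k, ‖((x k - c k) * t) • fderiv ℝ (f k) (γ t x)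
              + f k (γ t x) • ContinuousLinearMap.proj (R := ℝ) (φ := fun _ : Fin N => ℝ) k‖
            ≤ ∑ _k : Fin N, ((‖x₀ - c‖ + ε) * C + C) :=
              Finset.sum_le_sum fun k _ => hterm k
          _ = (N : ℝ) * ((‖x₀ - c‖ + ε) * C + C) := by
              rw [Finset.sum_const, Finset.card_univ, Fintype.card_fin, nsmul_eq_mul]
      · exact intervalIntegrable_const
      · -- differentiability in x
        refine Eventually.of_forall ?_
        intro t ht x hx
        have htI : t ∈ Icc (0:ℝ) 1 := hIoc_Icc ht
        have hγx : γ t x ∈ U := hγmem t htI x (hcb (hball_cb hx))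
        rw [hφ_def, hF'_def]
        apply HasFDerivAt.fun_sum
        intro k _
        have h1 : HasFDerivAt (fun x' : Fin N → ℝ => x' k - c k)
            (ContinuousLinearMap.proj (R := ℝ) (φ := fun _ : Fin N => ℝ) k) x := by
          have h := (ContinuousLinearMap.proj (R := ℝ)
            (φ := fun _ : Fin N => ℝ) k).hasFDerivAt (x := x)
          exact h.sub_const (c k)
        have hγd : HasFDerivAt (fun x' => γ t x')
            (t • ContinuousLinearMap.id ℝ (Fin N → ℝ)) x := by
          exact (((hasFDerivAt_id x).sub_const c).const_smul t).const_add c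
        have hfd : HasFDerivAt (f k) (fderiv ℝ (f k) (γ t x)) (γ t x) :=
          (cdo_diffAt hUo (hf k) hγx).hasFDerivAt
        have h2 : HasFDerivAt (fun x' => f k (γ t x'))
            ((fderiv ℝ (f k) (γ t x)).comp (t • ContinuousLinearMap.id ℝ (Fin N → ℝ))) x :=
          hfd.comp x hγd
        have h2' : (fderiv ℝ (f k) (γ t x)).comp (t • ContinuousLinearMap.id ℝ (Fin N → ℝ))
            = t • fderiv ℝ (f k) (γ t x) := by
          ext v; simp
        rw [h2'] at h2
        have h3 := h1.mul h2
        refine h3.congr_fderiv ?_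
        rw [smul_smul]
    -- identify the derivative with L x₀
    have hInt : IntervalIntegrable (F' x₀) volume 0 1 :=
      (hF'cont.mono (by rw [Set.uIcc_of_le zero_le_one])).intervalIntegrable
    have claim1 : ∀ l, (∫ t in (0:ℝ)..1, (F' x₀ t) (Pi.single l 1)) = f l x₀ := by
      intro l
      have hψd : ∀ t ∈ Set.uIcc (0:ℝ) 1,
          HasDerivAt (fun s => s * f l (γ s x₀)) ((F' x₀ t) (Pi.single l 1)) t := by
        intro t ht
        rw [Set.uIcc_of_le zero_le_one] at ht
        have hγx : γ t x₀ ∈ U := hγmem t ht x₀ hx₀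
        have hin : HasDerivAt (fun s : ℝ => γ s x₀) (x₀ - c) t := by
          have := ((hasDerivAt_id t).smul_const (x₀ - c)).const_add c
          simpa [hγ_def] using this
        have hg : HasDerivAt (fun s => f l (γ s x₀))
            ((fderiv ℝ (f l) (γ t x₀)) (x₀ - c)) t :=
          ((cdo_diffAt hUo (hf l) hγx).hasFDerivAt).comp_hasDerivAt t hin
        have hψ := (hasDerivAt_id t).mul hg
        refine hψ.congr_deriv ?_
        -- compute (F' x₀ t) (single l 1)
        rw [hF'_def]
        rw [ContinuousLinearMap.sum_apply]
        have hterm : ∀ k : Fin N, (((x₀ k - c k) * t) • fderiv ℝ (f k) (γ t x₀)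
            + f k (γ t x₀) • ContinuousLinearMap.proj (R := ℝ) (φ := fun _ : Fin N => ℝ) k)
              (Pi.single l 1)
            = ((x₀ k - c k) * t) * (fderiv ℝ (f k) (γ t x₀)) (Pi.single l 1)
              + f k (γ t x₀) * (Pi.single l (1:ℝ) : Fin N → ℝ) k := by
          intro k
          simp [ContinuousLinearMap.add_apply, ContinuousLinearMap.smul_apply]
        rw [Finset.sum_congr rfl fun k _ => hterm k]
        rw [Finset.sum_add_distrib]
        have hsum2 : ∑ k, f k (γ t x₀) * (Pi.single l (1:ℝ) : Fin N → ℝ) k = f l (γ t x₀) := by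
          rw [Finset.sum_eq_single l]
          · simp
          · intro i _ hil; simp [Pi.single_apply, Ne.symm hil]
          · simp
        have hsum1 : ∑ k, ((x₀ k - c k) * t) * (fderiv ℝ (f k) (γ t x₀)) (Pi.single l 1)
            = t * (fderiv ℝ (f l) (γ t x₀)) (x₀ - c) := by
          have hcr : ∀ k, (fderiv ℝ (f k) (γ t x₀)) (Pi.single l 1)
              = (fderiv ℝ (f l) (γ t x₀)) (Pi.single k 1) := by
            intro k
            exact hcurl _ hγx k l
          rw [Finset.sum_congr rfl fun k _ => by rw [hcr k]]
          rw [clm_apply_pi (fderiv ℝ (f l) (γ t x₀)) (x₀ - c)]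
          rw [Finset.mul_sum]
          refine Finset.sum_congr rfl fun k _ => ?_
          have : (x₀ - c) k = x₀ k - c k := rfl
          rw [this]; ring
        rw [hsum1, hsum2]
        simp only [id_eq]
        ring
      have hii : IntervalIntegrable (fun t => (F' x₀ t) (Pi.single l 1)) volume 0 1 := by
        apply ContinuousOn.intervalIntegrable
        rw [Set.uIcc_of_le zero_le_one]
        exact (ContinuousLinearMap.apply ℝ ℝ (Pi.single l 1)).continuous.comp_continuousOn hF'cont
      have := intervalIntegral.integral_eq_sub_of_hasDerivAt hψd hii
      rw [this]
      have h1 : γ (1:ℝ) x₀ = x₀ := by rw [hγ_def]; simp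
      simp [h1]
    have claim : (∫ t in (0:ℝ)..1, F' x₀ t) = L x₀ := by
      apply ContinuousLinearMap.ext
      intro v
      rw [clm_apply_pi _ v, clm_apply_pi (L x₀) v]
      refine Finset.sum_congr rfl fun l _ => ?_
      rw [ContinuousLinearMap.intervalIntegral_apply hInt, claim1 l, hLapply x₀ l]
    rw [hF_def]
    rw [← claim]
    exact hFd
  -- wrap up
  have hdiffOn : DifferentiableOn ℝ F U :=
    fun u hu => ((key u hu).differentiableAt).differentiableWithinAt
  have hLan : ContDiffOn ℝ (⊤ : ℕ∞) L U :=
    ContDiffOn.sum fun i _ => (hf i).smul contDiffOn_const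
  have hfderan : ContDiffOn ℝ (⊤ : ℕ∞) (fderiv ℝ F) U :=
    hLan.congr fun u hu => (key u hu).fderiv
  have hFan : ContDiffOn ℝ (⊤ : ℕ∞) F U :=
    (contDiffOn_infty_iff_fderiv_of_isOpen hUo).2 ⟨hdiffOn, hfderan⟩
  refine ⟨F, hFan, ?_⟩
  intro u hu k
  rw [pd, (key u hu).fderiv, hLapply]

lemma pd_eq_of_hasFDerivAt {N : ℕ} {f : (Fin N → ℝ) → ℝ} {T : (Fin N → ℝ) →L[ℝ] ℝ}
    {u : Fin N → ℝ} (h : HasFDerivAt f T u) (i : Fin N) :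
    pd f i u = T (Pi.single i 1) := by rw [pd, h.fderiv]

lemma hasFDerivAt_coord {N : ℕ} (j : Fin N) (u : Fin N → ℝ) :
    HasFDerivAt (fun v : Fin N → ℝ => v j)
      (ContinuousLinearMap.proj (R := ℝ) (φ := fun _ : Fin N => ℝ) j) u := by
  exact (ContinuousLinearMap.proj (R := ℝ) (φ := fun _ : Fin N => ℝ) j).hasFDerivAt (x := u)

lemma pd_congrOn {N : ℕ} {U : Set (Fin N → ℝ)} (hUo : IsOpen U)
    {f g : (Fin N → ℝ) → ℝ} (h : Set.EqOn f g U) {u : Fin N → ℝ} (hu : u ∈ U) (i : Fin N) :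
    pd f i u = pd g i u := by
  unfold pd
  rw [Filter.EventuallyEq.fderiv_eq (Filter.eventuallyEq_of_mem (hUo.mem_nhds hu) h)]

lemma const_of_pd_zero {N : ℕ} {U : Set (Fin N → ℝ)} (hUo : IsOpen U) (hUc : Convex ℝ U)
    {f : (Fin N → ℝ) → ℝ} (hd : ∀ u ∈ U, DifferentiableAt ℝ f u)
    (hz : ∀ u ∈ U, ∀ k, pd f k u = 0) :
    ∀ x ∈ U, ∀ y ∈ U, f x = f y := by
  have hz' : ∀ u ∈ U, ‖fderiv ℝ f u‖ ≤ 0 := by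
    intro u hu
    have : fderiv ℝ f u = 0 := by
      apply ContinuousLinearMap.ext
      intro v
      rw [clm_apply_pi]
      have : ∀ k, fderiv ℝ f u (Pi.single k 1) = 0 := fun k => hz u hu k
      simp [this]
    rw [this]; simp
  intro x hx y hy
  have := hUc.norm_image_sub_le_of_norm_fderiv_le hd hz' hy hx
  have h0 : ‖f x - f y‖ ≤ 0 := by simpa using this
  have := le_antisymm h0 (norm_nonneg _)
  rwa [norm_eq_zero, sub_eq_zero] at this

/-- main direction of Theorem 1: the compatibility relations with
the constant bracket `η` force the canonical (Liouville) form of `(g, b)` in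
terms of potentials `H¹, …, Hᴺ`. -/
theorem canonical_form_main (N : ℕ)
    (η : Matrix (Fin N) (Fin N) ℝ) (hηsym : η.IsSymm) (hηinv : IsUnit η.det)
    (K₁ : ℝ) (U : Set (Fin N → ℝ)) (hUo : IsOpen U) (hUc : Convex ℝ U)
    (g : Fin N → Fin N → (Fin N → ℝ) → ℝ)
    (b : Fin N → Fin N → Fin N → (Fin N → ℝ) → ℝ)
    (hgsm : ∀ i j, ContDiffOn ℝ (⊤ : ℕ∞) (g i j) U)
    (hbsm : ∀ i j k, ContDiffOn ℝ (⊤ : ℕ∞) (b i j k) U)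
    (hsym : ∀ u ∈ U, ∀ i j, g i j u = g j i u)
    (hgb : ∀ u ∈ U, ∀ i j k,
      pd (fun v => g i j v) k u = b i j k u + b j i k u)
    (hc1 : ∀ u ∈ U, ∀ i j r,
      ∑ s, η i s * b j r s u = ∑ s, η j s * b i r s u)
    (hc2 : ∀ u ∈ U, ∀ j r s k,
      pd (fun v => b j r s v) k u - pd (fun v => b j r k v) s u
        = K₁ * ((if r = s then (1 : ℝ) else 0) * (if j = k then (1 : ℝ) else 0)
            - (if j = s then (1 : ℝ) else 0) * (if r = k then (1 : ℝ) else 0))) :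
    ∃ H : Fin N → (Fin N → ℝ) → ℝ,
      (∀ i, ContDiffOn ℝ (⊤ : ℕ∞) (H i) U) ∧
      (∀ u ∈ U, ∀ i j,
        g i j u = ∑ s, η i s * pd (H j) s u + ∑ s, η j s * pd (H i) s u
          - K₁ * u i * u j) ∧
      (∀ u ∈ U, ∀ i j k,
        b i j k u = ∑ s, η i s * pd (pd (H j) s) k u
          - K₁ * (if i = k then (1 : ℝ) else 0) * u j) := by
  rcases U.eq_empty_or_nonempty with hUe | ⟨u₀, hu₀⟩
  · refine ⟨fun _ _ => 0, fun i => contDiffOn_const, ?_, ?_⟩ <;>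
      · intro u hu; rw [hUe] at hu; cases hu
  -- basic matrix facts
  set d : Matrix (Fin N) (Fin N) ℝ := η⁻¹ with hd_def
  have hηl : d * η = 1 := Matrix.nonsing_inv_mul η hηinv
  have hηr : η * d = 1 := Matrix.mul_nonsing_inv η hηinv
  have hdsym : ∀ p s, d p s = d s p := by
    intro p s
    have h : d.transpose = d := by
      rw [hd_def, Matrix.transpose_nonsing_inv, hηsym.eq]
    calc d p s = d.transpose s p := (Matrix.transpose_apply d s p).symm
      _ = d s p := by rw [h]
  have hdelta : ∀ p a, (∑ m, d p m * η m a) = if p = a then (1:ℝ) else 0 := by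
    intro p a
    rw [← Matrix.mul_apply, hηl, Matrix.one_apply]
  have hdelta' : ∀ p a, (∑ m, η p m * d m a) = if p = a then (1:ℝ) else 0 := by
    intro p a
    rw [← Matrix.mul_apply, hηr, Matrix.one_apply]
  -- analyticity of the data
  have hba : ∀ i j k, ContDiffOn ℝ (⊤ : ℕ∞) (b i j k) U :=
    fun i j k => hbsm i j k
  have hga : ∀ i j, ContDiffOn ℝ (⊤ : ℕ∞) (g i j) U :=
    fun i j => hgsm i j
  -- the A family
  set A : Fin N → Fin N → Fin N → (Fin N → ℝ) → ℝ :=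
    fun j s k v => (∑ i, d s i * b i j k v) + K₁ * d s k * v j with hA_def
  have hA_an : ∀ j s k, ContDiffOn ℝ (⊤ : ℕ∞) (A j s k) U := by
    intro j s k
    apply ContDiffOn.add
    · exact ContDiffOn.sum fun i _ => contDiffOn_const.mul (hba i j k)
    · exact (contDiffOn_const.mul contDiffOn_const).mul (cdo_coord j)
  have hA_d : ∀ j s k, ∀ u ∈ U, HasFDerivAt (A j s k)
      ((∑ i, d s i • fderiv ℝ (b i j k) u)
        + (K₁ * d s k) • ContinuousLinearMap.proj (R := ℝ) (φ := fun _ : Fin N => ℝ) j) u := by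
    intro j s k u hu
    apply HasFDerivAt.add
    · exact HasFDerivAt.fun_sum fun i _ =>
        ((cdo_diffAt hUo (hba i j k) hu).hasFDerivAt.const_mul (d s i))
    · exact (hasFDerivAt_coord j u).const_mul (K₁ * d s k)
  have pd_A : ∀ j s k l, ∀ u ∈ U, pd (A j s k) l u
      = (∑ i, d s i * pd (b i j k) l u) + K₁ * d s k * (if j = l then (1:ℝ) else 0) := by
    intro j s k l u hu
    rw [pd_eq_of_hasFDerivAt (hA_d j s k u hu)]
    simp only [ContinuousLinearMap.add_apply, ContinuousLinearMap.sum_apply,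
      ContinuousLinearMap.smul_apply, ContinuousLinearMap.proj_apply, smul_eq_mul,
      Pi.single_apply, pd, mul_assoc]
  -- curl of the A family
  have hA_curl : ∀ j s, ∀ u ∈ U, ∀ k l, pd (A j s k) l u = pd (A j s l) k u := by
    intro j s u hu k l
    rw [pd_A j s k l u hu, pd_A j s l k u hu]
    have hterm : ∀ i, d s i * pd (b i j k) l u
        = d s i * pd (b i j l) k u
          + (K₁ * (if j = k then (1:ℝ) else 0)) * (if i = l then d s i else 0)
          - (K₁ * (if j = l then (1:ℝ) else 0)) * (if i = k then d s i else 0) := by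
      intro i
      have h := hc2 u hu i j k l
      have h' : pd (b i j k) l u = pd (b i j l) k u
          + K₁ * ((if j = k then (1:ℝ) else 0) * (if i = l then (1:ℝ) else 0)
            - (if i = k then (1:ℝ) else 0) * (if j = l then (1:ℝ) else 0)) := by
        have e1 : pd (fun v => b i j k v) l u = pd (b i j k) l u := rfl
        have e2 : pd (fun v => b i j l v) k u = pd (b i j l) k u := rfl
        rw [e1, e2] at h
        linarith
      rw [h']
      split_ifs <;> ring
    rw [Finset.sum_congr rfl fun i _ => hterm i]
    rw [Finset.sum_sub_distrib, Finset.sum_add_distrib]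
    simp only [← Finset.mul_sum, Finset.sum_ite_eq', Finset.mem_univ, if_true]
    ring
  -- first integration: potentials P j s for A j s ·
  choose P hPan hPd using fun j s =>
    exists_potential hUo hUc (fun k => A j s k) (fun k => hA_an j s k) (hA_curl j s)
  -- symmetry of A in the two lower indices
  have hAsum : ∀ u ∈ U, ∀ j s k,
      (∑ i, d s i * b i j k u) = ∑ m, d k m * b m j s u := by
    intro u hu j s k
    set M : Fin N → Fin N → ℝ := fun m i => ∑ a, η m a * b i j a u with hM_def
    have hMsym : ∀ m i, M m i = M i m := fun m i => hc1 u hu m i j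
    have hexp : ∀ (i k' : Fin N), b i j k' u = ∑ m, d k' m * M m i := by
      intro i k'
      have : ∑ m, d k' m * M m i = ∑ a, (∑ m, d k' m * η m a) * b i j a u := by
        rw [hM_def]
        simp only [Finset.mul_sum, Finset.sum_mul]
        rw [Finset.sum_comm]
        exact Finset.sum_congr rfl fun a _ => Finset.sum_congr rfl fun m _ => by ring
      rw [this]
      rw [Finset.sum_congr rfl fun a _ => by rw [hdelta k' a]]
      simp [ite_mul, Finset.sum_ite_eq]
    calc ∑ i, d s i * b i j k u
        = ∑ i, ∑ m, d s i * (d k m * M m i) := by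
          refine Finset.sum_congr rfl fun i _ => ?_
          rw [hexp i k, Finset.mul_sum]
      _ = ∑ m, ∑ i, d s i * (d k m * M m i) := Finset.sum_comm
      _ = ∑ m, d k m * (∑ i, d s i * M i m) := by
          refine Finset.sum_congr rfl fun m _ => ?_
          rw [Finset.mul_sum]
          refine Finset.sum_congr rfl fun i _ => ?_
          rw [hMsym m i]; ring
      _ = ∑ m, d k m * b m j s u := by
          refine Finset.sum_congr rfl fun m _ => ?_
          rw [← hexp m s]
  have hAsym : ∀ u ∈ U, ∀ j s k, A j s k u = A j k s u := by
    intro u hu j s k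
    rw [hA_def]
    simp only
    rw [hAsum u hu j s k, hdsym s k]
  -- second integration: potentials H₀ j for P j ·
  choose H₀ hH₀an hH₀d using fun j =>
    exists_potential hUo hUc (fun s => P j s) (fun s => hPan j s)
      (fun u hu s k => by rw [hPd j s u hu k, hPd j k u hu s, hAsym u hu j s k])
  have hH₀2 : ∀ j s k, ∀ u ∈ U, pd (pd (H₀ j) s) k u = A j s k u := by
    intro j s k u hu
    have h1 : Set.EqOn (pd (H₀ j) s) (P j s) U := fun v hv => hH₀d j v hv s
    rw [pd_congrOn hUo h1 hu k]
    exact hPd j s u hu k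
  -- the contracted identity
  have hcontract : ∀ u ∈ U, ∀ i j k,
      (∑ s, η i s * A j s k u) = b i j k u + K₁ * (if i = k then (1:ℝ) else 0) * u j := by
    intro u hu i j k
    rw [hA_def]
    simp only
    rw [Finset.sum_congr rfl fun s (_ : s ∈ Finset.univ) => by
      rw [mul_add, Finset.mul_sum]]
    rw [Finset.sum_add_distrib]
    congr 1
    · rw [Finset.sum_comm]
      calc ∑ m, ∑ s, η i s * (d s m * b m j k u)
          = ∑ m, (∑ s, η i s * d s m) * b m j k u := by
            refine Finset.sum_congr rfl fun m _ => ?_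
            rw [Finset.sum_mul]
            exact Finset.sum_congr rfl fun s _ => by ring
        _ = b i j k u := by
            rw [Finset.sum_congr rfl fun m _ => by rw [hdelta' i m]]
            simp [ite_mul, Finset.sum_ite_eq]
    · calc ∑ s, η i s * (K₁ * d s k * u j)
          = K₁ * (∑ s, η i s * d s k) * u j := by
            rw [Finset.mul_sum, Finset.sum_mul]
            exact Finset.sum_congr rfl fun s _ => by ring
        _ = K₁ * (if i = k then (1:ℝ) else 0) * u j := by rw [hdelta' i k]
  -- the G functions
  set G : Fin N → Fin N → (Fin N → ℝ) → ℝ := fun i j v =>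
    (∑ s, η i s * P j s v) + (∑ s, η j s * P i s v) - K₁ * v i * v j with hG_def
  have hGan : ∀ i j, ContDiffOn ℝ (⊤ : ℕ∞) (G i j) U := by
    intro i j
    apply ContDiffOn.sub
    · apply ContDiffOn.add
      · exact ContDiffOn.sum fun s _ => contDiffOn_const.mul (hPan j s)
      · exact ContDiffOn.sum fun s _ => contDiffOn_const.mul (hPan i s)
    · exact (contDiffOn_const.mul (cdo_coord i)).mul (cdo_coord j)
  have hG_d : ∀ i j, ∀ u ∈ U, HasFDerivAt (G i j)
      ((∑ s, η i s • fderiv ℝ (P j s) u) + (∑ s, η j s • fderiv ℝ (P i s) u)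
        - ((K₁ * u i) • ContinuousLinearMap.proj (R := ℝ) (φ := fun _ : Fin N => ℝ) j
          + u j • (K₁ • ContinuousLinearMap.proj (R := ℝ) (φ := fun _ : Fin N => ℝ) i))) u := by
    intro i j u hu
    apply HasFDerivAt.sub
    · apply HasFDerivAt.add
      · exact HasFDerivAt.fun_sum fun s _ =>
          ((cdo_diffAt hUo (hPan j s) hu).hasFDerivAt.const_mul (η i s))
      · exact HasFDerivAt.fun_sum fun s _ =>
          ((cdo_diffAt hUo (hPan i s) hu).hasFDerivAt.const_mul (η j s))
    · exact ((hasFDerivAt_coord i u).const_mul K₁).mul (hasFDerivAt_coord j u)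
  have pd_G : ∀ u ∈ U, ∀ i j k, pd (G i j) k u = b i j k u + b j i k u := by
    intro u hu i j k
    rw [pd_eq_of_hasFDerivAt (hG_d i j u hu)]
    simp only [ContinuousLinearMap.sub_apply, ContinuousLinearMap.add_apply,
      ContinuousLinearMap.sum_apply, ContinuousLinearMap.smul_apply,
      ContinuousLinearMap.proj_apply, smul_eq_mul, Pi.single_apply]
    have e1 : ∑ s, η i s * fderiv ℝ (P j s) u (Pi.single k 1)
        = b i j k u + K₁ * (if i = k then (1:ℝ) else 0) * u j := by
      rw [Finset.sum_congr rfl fun s (_ : s ∈ Finset.univ) => by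
        rw [show fderiv ℝ (P j s) u (Pi.single k 1) = pd (P j s) k u from rfl, hPd j s u hu k]]
      exact hcontract u hu i j k
    have e2 : ∑ s, η j s * fderiv ℝ (P i s) u (Pi.single k 1)
        = b j i k u + K₁ * (if j = k then (1:ℝ) else 0) * u i := by
      rw [Finset.sum_congr rfl fun s (_ : s ∈ Finset.univ) => by
        rw [show fderiv ℝ (P i s) u (Pi.single k 1) = pd (P i s) k u from rfl, hPd i s u hu k]]
      exact hcontract u hu j i k
    rw [e1, e2]
    split_ifs <;> ring
  -- `g - G` is constant on `U`
  have hDconst : ∀ i j, ∀ x ∈ U, ∀ y ∈ U, g i j x - G i j x = g i j y - G i j y := by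
    intro i j
    apply const_of_pd_zero hUo hUc
    · intro u hu
      exact ((cdo_diffAt hUo (hga i j) hu)).sub ((cdo_diffAt hUo (hGan i j) hu))
    · intro u hu k
      have hs : HasFDerivAt (fun v => g i j v - G i j v)
          (fderiv ℝ (g i j) u - fderiv ℝ (G i j) u) u :=
        ((cdo_diffAt hUo (hga i j) hu).hasFDerivAt).sub
          ((cdo_diffAt hUo (hGan i j) hu).hasFDerivAt)
      rw [pd_eq_of_hasFDerivAt hs, ContinuousLinearMap.sub_apply]
      have h2 : fderiv ℝ (G i j) u (Pi.single k 1) = pd (G i j) k u := rfl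
      rw [h2, pd_G u hu i j k]
      have h3 := hgb u hu i j k
      rw [show pd (fun v => g i j v) k u = fderiv ℝ (g i j) u (Pi.single k 1) from rfl] at h3
      rw [h3]; ring
  set Cm : Fin N → Fin N → ℝ := fun i j => g i j u₀ - G i j u₀ with hCm_def
  have hGsymm : ∀ v, ∀ i j, G i j v = G j i v := by
    intro v i j; rw [hG_def]; simp only; ring
  have hCsym : ∀ i j, Cm i j = Cm j i := by
    intro i j; rw [hCm_def]; simp only; rw [hsym u₀ hu₀ i j, hGsymm u₀ i j]
  set μm : Fin N → Fin N → ℝ := fun j s => (1/2) * ∑ p, Cm j p * d p s with hμ_def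
  set H : Fin N → (Fin N → ℝ) → ℝ := fun j v => H₀ j v + ∑ k, μm j k * v k with hH_def
  have hηino : ∀ i j, (∑ s, η i s * μm j s) = Cm i j / 2 := by
    intro i j
    calc ∑ s, η i s * μm j s
        = ∑ s, ∑ p, (1/2) * (Cm j p * (η i s * d s p)) := by
          refine Finset.sum_congr rfl fun s _ => ?_
          rw [hμ_def]
          simp only
          rw [Finset.mul_sum, Finset.mul_sum]
          refine Finset.sum_congr rfl fun p _ => ?_
          rw [hdsym p s]; ring
      _ = ∑ p, ∑ s, (1/2) * (Cm j p * (η i s * d s p)) := Finset.sum_comm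
      _ = ∑ p, (1/2) * (Cm j p * (∑ s, η i s * d s p)) := by
          refine Finset.sum_congr rfl fun p _ => ?_
          rw [Finset.mul_sum, Finset.mul_sum]
      _ = ∑ p, (1/2) * (Cm j p * (if i = p then (1:ℝ) else 0)) := by
          refine Finset.sum_congr rfl fun p _ => ?_
          rw [hdelta' i p]
      _ = Cm i j / 2 := by
          simp only [mul_ite, mul_one, mul_zero]
          rw [Finset.sum_ite_eq]
          simp [hCsym i j]
          ring
  have pd_H : ∀ u ∈ U, ∀ j s, pd (H j) s u = P j s u + μm j s := by
    intro u hu j s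
    have hlin : HasFDerivAt (fun v : Fin N → ℝ => ∑ k, μm j k * v k)
        (∑ k, μm j k • ContinuousLinearMap.proj (R := ℝ) (φ := fun _ : Fin N => ℝ) k) u :=
      HasFDerivAt.fun_sum fun k _ => (hasFDerivAt_coord k u).const_mul (μm j k)
    have hs : HasFDerivAt (H j)
        (fderiv ℝ (H₀ j) u
          + ∑ k, μm j k • ContinuousLinearMap.proj (R := ℝ) (φ := fun _ : Fin N => ℝ) k) u :=
      ((cdo_diffAt hUo (hH₀an j) hu).hasFDerivAt).add hlin
    rw [pd_eq_of_hasFDerivAt hs, ContinuousLinearMap.add_apply]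
    have h1 : fderiv ℝ (H₀ j) u (Pi.single s 1) = P j s u := hH₀d j u hu s
    have h2 : (∑ k, μm j k • ContinuousLinearMap.proj (R := ℝ)
        (φ := fun _ : Fin N => ℝ) k) (Pi.single s 1) = μm j s := by
      rw [ContinuousLinearMap.sum_apply]
      rw [Finset.sum_congr rfl fun k (_ : k ∈ Finset.univ) => by
        rw [ContinuousLinearMap.smul_apply, ContinuousLinearMap.proj_apply, smul_eq_mul,
          Pi.single_apply]]
      simp [mul_ite, Finset.sum_ite_eq']
    rw [h1, h2]
  refine ⟨H, ?_, ?_, ?_⟩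
  · intro j
    have han : ContDiffOn ℝ (⊤ : ℕ∞) (H j) U :=
      (hH₀an j).add
        (ContDiffOn.sum fun k _ => contDiffOn_const.mul (cdo_coord k))
    exact han
  · intro u hu i j
    have e1 : ∑ s, η i s * pd (H j) s u = (∑ s, η i s * P j s u) + Cm i j / 2 := by
      rw [Finset.sum_congr rfl fun s (_ : s ∈ Finset.univ) => by rw [pd_H u hu j s, mul_add]]
      rw [Finset.sum_add_distrib, hηino i j]
    have e2 : ∑ s, η j s * pd (H i) s u = (∑ s, η j s * P i s u) + Cm j i / 2 := by
      rw [Finset.sum_congr rfl fun s (_ : s ∈ Finset.univ) => by rw [pd_H u hu i s, mul_add]]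
      rw [Finset.sum_add_distrib, hηino j i]
    have hGval : G i j u = (∑ s, η i s * P j s u) + (∑ s, η j s * P i s u) - K₁ * u i * u j := by
      rw [hG_def]
    have hconst : g i j u - G i j u = Cm i j := hDconst i j u hu u₀ hu₀
    rw [e1, e2, hCsym j i]
    linear_combination hGval + hconst
  · intro u hu i j k
    have e3 : ∀ s, pd (pd (H j) s) k u = A j s k u := by
      intro s
      have heq : Set.EqOn (pd (H j) s) (fun v => P j s v + μm j s) U :=
        fun v hv => pd_H v hv j s
      rw [pd_congrOn hUo heq hu k]
      have hs : HasFDerivAt (fun v => P j s v + μm j s) (fderiv ℝ (P j s) u) u :=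
        ((cdo_diffAt hUo (hPan j s) hu).hasFDerivAt).add_const (μm j s)
      rw [pd_eq_of_hasFDerivAt hs]
      exact hPd j s u hu k
    rw [Finset.sum_congr rfl fun s (_ : s ∈ Finset.univ) => by rw [e3 s]]
    rw [hcontract u hu i j k]
    ring
end

section
/- Let η be an invertible constant symmetric N×N real matrix, K₁ ∈ ℝ, and H^1,...,H^N smooth on open U ⊆ ℝ^N. Set g^{ij} = η^{is}∂H^j/∂u^s + η^{js}∂H^i/∂u^s - K₁ u^i u^j and b^{ij}_k = η^{is}∂²H^j/∂u^s∂u^k - K₁ δ^i_k u^j. Then the relation g^{is} b^{jr}_s = g^{js} b^{ir}_s (sum over s) holds for all i,j,r if and only if equation (16) of the paper holds: (η^{ir}∂H^s/∂u^r + η^{sr}∂H^i/∂u^r - K₁ u^i u^s) η^{jp} ∂²H^k/∂u^p∂u^s = (η^{jr}∂H^s/∂u^r + η^{sr}∂H^j/∂u^r - K₁ u^j u^s) η^{ip} ∂²H^k/∂u^p∂u^s for all i,j,k. -/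
/-- for the canonical form, the relation
`g^{is} b^{jr}_s = g^{js} b^{ir}_s` is equivalent to equation (16) of the paper. -/
theorem canonical_form_relation_s3_iff (N : ℕ)
    (η : Matrix (Fin N) (Fin N) ℝ) (hηsym : η.IsSymm) (hηinv : IsUnit η.det)
    (K₁ : ℝ) (U : Set (Fin N → ℝ)) (hU : IsOpen U)
    (H : Fin N → (Fin N → ℝ) → ℝ) (hH : ∀ i, ContDiffOn ℝ (⊤ : ℕ∞) (H i) U)
    (g : Fin N → Fin N → (Fin N → ℝ) → ℝ)
    (hg : ∀ i j u, g i j u =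
      ∑ s, η i s * pd (H j) s u + ∑ s, η j s * pd (H i) s u - K₁ * u i * u j)
    (b : Fin N → Fin N → Fin N → (Fin N → ℝ) → ℝ)
    (hb : ∀ i j k u, b i j k u =
      ∑ s, η i s * pd (pd (H j) s) k u - K₁ * (if i = k then (1 : ℝ) else 0) * u j) :
    (∀ u ∈ U, ∀ i j r,
        ∑ s, g i s u * b j r s u = ∑ s, g j s u * b i r s u) ↔
    (∀ u ∈ U, ∀ i j k,
        ∑ s, (∑ r, η i r * pd (H s) r u + ∑ r, η s r * pd (H i) r u - K₁ * u i * u s) *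
            (∑ p, η j p * pd (pd (H k) p) s u)
          = ∑ s, (∑ r, η j r * pd (H s) r u + ∑ r, η s r * pd (H j) r u - K₁ * u j * u s) *
            (∑ p, η i p * pd (pd (H k) p) s u)) := by
  have hgsymm : ∀ i j u, g i j u = g j i u := by
    intro i j u; rw [hg, hg]; ring
  have key : ∀ (u : Fin N → ℝ) (i j r : Fin N),
      ∑ s, g i s u * b j r s u =
        (∑ s, g i s u * (∑ p, η j p * pd (pd (H r) p) s u)) - K₁ * g i j u * u r := by
    intro u i j r
    have h1 : ∀ s : Fin N, g i s u * b j r s u =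
        g i s u * (∑ p, η j p * pd (pd (H r) p) s u)
          - (if j = s then g i s u * (K₁ * u r) else 0) := by
      intro s
      rw [hb]
      split <;> ring
    rw [Finset.sum_congr rfl (fun s _ => h1 s), Finset.sum_sub_distrib,
      Finset.sum_ite_eq]
    simp only [Finset.mem_univ, if_true]
    ring
  constructor
  · intro h u hu i j k
    have h0 := h u hu i j k
    rw [key, key, hgsymm j i u] at h0
    have h2 : (∑ s, g i s u * (∑ p, η j p * pd (pd (H k) p) s u))
        = ∑ s, g j s u * (∑ p, η i p * pd (pd (H k) p) s u) := by
      linarith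
    simpa only [hg] using h2
  · intro h u hu i j r
    have h0 := h u hu i j r
    rw [key, key, hgsymm j i u]
    have h2 : (∑ s, g i s u * (∑ p, η j p * pd (pd (H r) p) s u))
        = ∑ s, g j s u * (∑ p, η i p * pd (pd (H r) p) s u) := by
      simpa only [hg] using h0
    linarith
end

section
/- Let K ≠ 0, N ≥ 2, m ∈ {1,...,N}, a^i ≠ 0 for i ≠ m, a^m = 0, and u ∈ ℝ^N with u^m ≠ 0. Define g^{ij}(u) = a^i δ^{ij} - K u^i u^j, and define the matrix G by: G_{mm} = -(1/(K (u^m)^2))(1 - K Σ_{s≠m} (u^s)^2/a^s), G_{im} = G_{mi} = -(1/a^i)(u^i/u^m) for i ≠ m, G_{ii} = 1/a^i for i ≠ m, and G_{ij} = 0 for i ≠ j with i,j ≠ m. Then Σ_s g^{is}(u) G_{sj}(u) = δ^i_j for all i,j. -/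
/-!
The contravariant metric is `g = diag a - K u uᵀ`, so `(g G)ᵢⱼ = aᵢ Gᵢⱼ - K uᵢ (uᵀG)ⱼ`.
The row vector `uᵀG` is `-(K uᵐ)⁻¹ eₘ`: off column `m` only `u j G j j` and `u m G m j` survive
and cancel, while in column `m` the sum `Σ_{s≠m} (uˢ)²/aˢ` from `G_{sm}` cancels against
the one inside `G_{mm}`. The rank-one term therefore only contributes `uᵢ/uᵐ` in column `m`,
which is exactly what `aᵢ Gᵢₘ = -uᵢ/uᵐ` misses, and `aᵐ = 0` kills row `m` of `diag a · G`.
-/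

open Finset

section

variable {ι 𝕜 : Type*} [Fintype ι] [Field 𝕜]

theorem sum_diagonal_sub_rankOne_mul [DecidableEq ι] (K : 𝕜) (a u : ι → 𝕜) (G : ι → ι → 𝕜)
    (i j : ι) :
    ∑ s, (a i * (if i = s then (1 : 𝕜) else 0) - K * u i * u s) * G s j
      = a i * G i j - K * u i * ∑ s, u s * G s j := by
  simp only [sub_mul, sum_sub_distrib, mul_ite, mul_one, mul_zero, ite_mul, zero_mul,
    sum_ite_eq, mem_univ, if_true, mul_sum, mul_assoc]

variable {m : ι} {a u : ι → 𝕜} {G : ι → ι → 𝕜}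

theorem sum_mul_col_eq_zero_of_ne {j : ι} (hjm : j ≠ m) (hum : u m ≠ 0) (haj : a j ≠ 0)
    (hGmj : G m j = -(1 / a j) * (u j / u m)) (hGjj : G j j = 1 / a j)
    (hGsj : ∀ s, s ≠ j → s ≠ m → G s j = 0) :
    ∑ s, u s * G s j = 0 := by
  rw [Fintype.sum_eq_add j m hjm fun s ⟨hsj, hsm⟩ => by rw [hGsj s hsj hsm, mul_zero],
    hGjj, hGmj]
  field_simp
  ring

theorem sum_mul_col_self [DecidableEq ι] {K : 𝕜} (hK : K ≠ 0) (hum : u m ≠ 0)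
    (ha : ∀ i, i ≠ m → a i ≠ 0)
    (hGmm : G m m = -(1 / (K * (u m) ^ 2)) * (1 - K * ∑ s ∈ univ.erase m, (u s) ^ 2 / a s))
    (hGim : ∀ i, i ≠ m → G i m = -(1 / a i) * (u i / u m)) :
    ∑ s, u s * G s m = -1 / (K * u m) := by
  have hoff : ∑ s ∈ univ.erase m, u s * G s m
      = -(∑ s ∈ univ.erase m, (u s) ^ 2 / a s) / u m := by
    rw [neg_div, sum_div, ← sum_neg_distrib]
    refine sum_congr rfl fun s hs => ?_
    have hsm := ne_of_mem_erase hs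
    have := ha s hsm
    rw [hGim s hsm]
    field_simp
  rw [← add_sum_erase _ _ (mem_univ m), hoff, hGmm]
  field_simp
  ring

end

theorem model_metric_inverse_degenerate_general (N : ℕ) (K : ℝ) (hK : K ≠ 0)
    (m : Fin N) (a : Fin N → ℝ) (ham : a m = 0) (ha : ∀ i, i ≠ m → a i ≠ 0)
    (u : Fin N → ℝ) (hum : u m ≠ 0)
    (G : Fin N → Fin N → ℝ)
    (hGmm : G m m = -(1 / (K * (u m) ^ 2)) *
      (1 - K * ∑ s ∈ Finset.univ.erase m, (u s) ^ 2 / a s))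
    (hGim : ∀ i, i ≠ m → G i m = -(1 / a i) * (u i / u m))
    (hGmi : ∀ i, i ≠ m → G m i = -(1 / a i) * (u i / u m))
    (hGii : ∀ i, i ≠ m → G i i = 1 / a i)
    (hGij : ∀ i j, i ≠ j → i ≠ m → j ≠ m → G i j = 0) :
    ∀ i j : Fin N,
      ∑ s, (a i * (if i = s then (1 : ℝ) else 0) - K * u i * u s) * G s j
        = if i = j then 1 else 0 := by
  intro i j
  rw [sum_diagonal_sub_rankOne_mul]
  by_cases hj : j = m
  · subst hj
    have hrankOne : K * u i * (-1 / (K * u j)) = -(u i / u j) := by field_simp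
    rw [sum_mul_col_self hK hum ha hGmm hGim, hrankOne, sub_neg_eq_add]
    by_cases hi : i = j
    · rw [if_pos hi, hi, ham, zero_mul, zero_add, div_self hum]
    · rw [if_neg hi, hGim i hi, one_div, neg_mul, mul_neg, mul_inv_cancel_left₀ (ha i hi),
        neg_add_cancel]
  · rw [sum_mul_col_eq_zero_of_ne hj hum (ha j hj) (hGmi j hj) (hGii j hj)
      fun s hsj hsm => hGij s j hsj hsm hj, mul_zero, sub_zero]
    by_cases hij : i = j
    · subst hij
      rw [if_pos rfl, hGii i hj, mul_one_div_cancel (ha i hj)]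
    · rw [if_neg hij]
      by_cases hi : i = m
      · rw [hi, ham, zero_mul]
      · rw [hGij i j hij hi hj, mul_zero]

/-- explicit inverse (covariant metric) in the degenerate case
`aᵐ = 0`, `K ≠ 0`, `uᵐ ≠ 0`. -/
theorem model_metric_inverse_degenerate (N : ℕ) (hN : 2 ≤ N) (K : ℝ) (hK : K ≠ 0)
    (m : Fin N) (a : Fin N → ℝ) (ham : a m = 0) (ha : ∀ i, i ≠ m → a i ≠ 0)
    (u : Fin N → ℝ) (hum : u m ≠ 0)
    (G : Fin N → Fin N → ℝ)
    (hGmm : G m m = -(1 / (K * (u m) ^ 2)) *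
      (1 - K * ∑ s ∈ Finset.univ.erase m, (u s) ^ 2 / a s))
    (hGim : ∀ i, i ≠ m → G i m = -(1 / a i) * (u i / u m))
    (hGmi : ∀ i, i ≠ m → G m i = -(1 / a i) * (u i / u m))
    (hGii : ∀ i, i ≠ m → G i i = 1 / a i)
    (hGij : ∀ i j, i ≠ j → i ≠ m → j ≠ m → G i j = 0) :
    ∀ i j : Fin N,
      ∑ s, (a i * (if i = s then (1 : ℝ) else 0) - K * u i * u s) * G s j
        = if i = j then 1 else 0 :=
  model_metric_inverse_degenerate_general N K hK m a ham ha u hum G hGmm hGim hGmi hGii hGij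
end
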